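/- Let E be a Fréchet space. Then the Mackey-closure (c^∞) topology on E coincides with the given metrizable locally convex topology. -/

import Mathlib

open Filter Topology Set Bornology Pointwise

universe u v

/-- Gâteaux derivative of `Φ` at `x` in direction `v`, with value `w`. -/
def HasGDerivAt {E : Type u} {F : Type v} [AddCommGroup E] [Module ℝ E]
    [AddCommGroup F] [Module ℝ F] [TopologicalSpace F]
    (Φ : E → F) (x v : E) (w : F) : Prop :=
  Tendsto (fun t : ℝ => t⁻¹ • (Φ (x + t • v) - Φ x)) (𝓝[≠] (0 : ℝ)) (𝓝 w)

/-- Derivative of a curve `c : ℝ → E` at `t`, with value `v`. -/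
def CurveDerivAt {E : Type u} [AddCommGroup E] [Module ℝ E] [TopologicalSpace E]
    (c : ℝ → E) (v : E) (t : ℝ) : Prop :=
  Tendsto (fun h : ℝ => h⁻¹ • (c (t + h) - c t)) (𝓝[≠] (0 : ℝ)) (𝓝 v)

/-- The curve `c` is of class `C^k`: derivatives up to order `k` exist and are continuous. -/
def IsCkCurve {E : Type u} [AddCommGroup E] [Module ℝ E] [TopologicalSpace E]
    (k : ℕ) (c : ℝ → E) : Prop :=
  ∃ D : ℕ → ℝ → E, D 0 = c ∧ (∀ n < k, ∀ t, CurveDerivAt (D n) (D (n + 1) t) t) ∧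
    ∀ n ≤ k, Continuous (D n)

/-- The curve `c` is smooth (`C^∞`): all iterated derivatives exist and are continuous. -/
def IsSmoothCurve {E : Type u} [AddCommGroup E] [Module ℝ E] [TopologicalSpace E]
    (c : ℝ → E) : Prop :=
  ∃ D : ℕ → ℝ → E, D 0 = c ∧ (∀ n, ∀ t, CurveDerivAt (D n) (D (n + 1) t) t) ∧
    ∀ n, Continuous (D n)

/-- The set of difference quotients of `c` over `J`. -/
def DiffQuotients {E : Type u} [AddCommGroup E] [Module ℝ E]
    (c : ℝ → E) (J : Set ℝ) : Set E :=
  {x | ∃ t₁ ∈ J, ∃ t₂ ∈ J, t₁ ≠ t₂ ∧ x = (t₂ - t₁)⁻¹ • (c t₂ - c t₁)}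

/-- `c` is Lipschitz on `J`: its set of difference quotients over `J` is bounded. -/
def LipschitzOnSet {E : Type u} [AddCommGroup E] [Module ℝ E] [TopologicalSpace E]
    (c : ℝ → E) (J : Set ℝ) : Prop :=
  IsVonNBounded ℝ (DiffQuotients c J)

/-- `c` is locally Lipschitz: every real has a neighborhood on which `c` is Lipschitz. -/
def LocallyLipschitzCurve {E : Type u} [AddCommGroup E] [Module ℝ E] [TopologicalSpace E]
    (c : ℝ → E) : Prop :=
  ∀ t : ℝ, ∃ J ∈ 𝓝 t, LipschitzOnSet c J

/-- `c` is of class `Lip^k`: derivatives up to order `k` exist and the `k`-th one is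
locally Lipschitz. -/
def IsLipkCurve {E : Type u} [AddCommGroup E] [Module ℝ E] [TopologicalSpace E]
    (k : ℕ) (c : ℝ → E) : Prop :=
  ∃ D : ℕ → ℝ → E, D 0 = c ∧ (∀ n < k, ∀ t, CurveDerivAt (D n) (D (n + 1) t) t) ∧
    LocallyLipschitzCurve (D k)

/-- A set is absolutely convex if it is convex and balanced. -/
def AbsolutelyConvex {E : Type u} [AddCommGroup E] [Module ℝ E] (B : Set E) : Prop :=
  Convex ℝ B ∧ Balanced ℝ B

/-- A sequence `x` Mackey-converges to `l`. -/
def MackeyConvSeq {E : Type u} [AddCommGroup E] [Module ℝ E] [TopologicalSpace E]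
    (x : ℕ → E) (l : E) : Prop :=
  ∃ B : Set E, AbsolutelyConvex B ∧ IsVonNBounded ℝ B ∧
    ∃ μ : ℕ → ℝ, Tendsto μ atTop (𝓝 (0 : ℝ)) ∧ ∀ n, x n - l ∈ μ n • B

/-- `E` is Mackey-complete: every Mackey-Cauchy net converges. -/
def MackeyComplete (E : Type u) [AddCommGroup E] [Module ℝ E] [TopologicalSpace E] : Prop :=
  ∀ (ι : Type) [Nonempty ι] [SemilatticeSup ι] (x : ι → E),
    (∃ B : Set E, AbsolutelyConvex B ∧ IsVonNBounded ℝ B ∧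
      ∃ μ : ι × ι → ℝ, Tendsto μ atTop (𝓝 (0 : ℝ)) ∧ ∀ i j, x i - x j ∈ μ (i, j) • B) →
    ∃ l, Tendsto x atTop (𝓝 l)

/-- The Mackey-closure (`c^∞`) topology: the finest topology on `E` making all smooth
curves `ℝ → E` continuous. -/
def cInfTopology (E : Type u) [AddCommGroup E] [Module ℝ E] [TopologicalSpace E] :
    TopologicalSpace E :=
  ⨆ c : {c : ℝ → E // IsSmoothCurve c}, TopologicalSpace.coinduced c.1 inferInstance

/-- `Φ` is conveniently smooth on `U`: it sends smooth curves into `U` to smooth curves. -/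
def ConvSmoothOn {E : Type u} {F : Type v} [AddCommGroup E] [Module ℝ E] [TopologicalSpace E]
    [AddCommGroup F] [Module ℝ F] [TopologicalSpace F]
    (Φ : E → F) (U : Set E) : Prop :=
  ∀ c : ℝ → E, IsSmoothCurve c → (∀ t, c t ∈ U) → IsSmoothCurve (Φ ∘ c)

/-- Bastiani `C^k` maps: `C^0` means continuous on `U`; `C^{k+1}` means the Gâteaux
differential exists on `U × E` and is `C^k` there. -/
def IsCBastOn (F : Type v) [AddCommGroup F] [Module ℝ F] [TopologicalSpace F] :
    (k : ℕ) → (E : Type u) → [AddCommGroup E] → [Module ℝ E] → [TopologicalSpace E] →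
      (E → F) → Set E → Prop
  | 0, _, _, _, _, Φ, U => ContinuousOn Φ U
  | k + 1, E, iA, iM, iT, Φ, U =>
      letI : AddCommGroup E := iA
      letI : Module ℝ E := iM
      letI : TopologicalSpace E := iT
      ∃ D : E × E → F, (∀ x ∈ U, ∀ v, HasGDerivAt Φ x v (D (x, v))) ∧
        IsCBastOn F k (E × E) D (U ×ˢ (Set.univ : Set E))

/-- `Φ` is smooth on `U` in the sense of Bastiani. -/
def BastSmoothOn {E : Type u} {F : Type v} [AddCommGroup E] [Module ℝ E] [TopologicalSpace E]
    [AddCommGroup F] [Module ℝ F] [TopologicalSpace F]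
    (Φ : E → F) (U : Set E) : Prop :=
  ∀ k : ℕ, IsCBastOn F k E Φ U

/-- The absolutely convex hull of the closure of `A`. -/
def absConvexHullOfClosure {E : Type u} [AddCommGroup E] [Module ℝ E] [TopologicalSpace E]
    (A : Set E) : Set E :=
  ⋂₀ {t | closure A ⊆ t ∧ AbsolutelyConvex t}

/-!
Smooth curves are continuous, so the `c^∞`-topology is finer than the given one. Conversely, let
`U` be `c^∞`-open and `x ∈ U`. If `U` were not a neighbourhood of `x`, first countability would
give points `y n ∉ U` converging to `x` so fast that `2 ^ (k * n) • (y n - x) → 0` for every `k`.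
Gluing rescaled copies of a bump function `ψ` with disjoint supports yields the curve
`c t = x + ∑ₙ ψ (2 ^ n * t - 1) • (y n - x)` with `c 0 = x` and `c 2⁻ⁿ = y n`; its `k`-th
derivative has coefficients of size `2 ^ (k * n)` near `2⁻ⁿ`, which the decay of `y n - x` beats,
so `c` is smooth also at `0`. Then `c ⁻¹' U` is an open set containing `0` but no `2⁻ⁿ`, which
is absurd.
-/

section SmoothCurves

variable {E : Type*} [AddCommGroup E] [Module ℝ E] [TopologicalSpace E]

theorem CurveDerivAt.congr_of_eventuallyEq {c c₁ : ℝ → E} {v : E} {t : ℝ}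
    (h : CurveDerivAt c v t) (h₁ : c₁ =ᶠ[𝓝 t] c) : CurveDerivAt c₁ v t := by
  have hshift : Tendsto (fun s : ℝ => t + s) (𝓝[≠] 0) (𝓝 t) := by
    simpa using ((continuous_const_add t).tendsto 0).mono_left nhdsWithin_le_nhds
  refine h.congr' ((hshift.eventually h₁).mono fun s hs => ?_)
  simp only [hs, h₁.eq_of_nhds]

theorem CurveDerivAt.const_add {c : ℝ → E} {v : E} {t : ℝ} (h : CurveDerivAt c v t) (x : E) :
    CurveDerivAt (fun s => x + c s) v t := by
  simpa only [CurveDerivAt, add_sub_add_left_eq_sub] using h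

theorem HasDerivAt.curveDerivAt_smul_const [ContinuousSMul ℝ E] {f : ℝ → ℝ} {f' t : ℝ}
    (hf : HasDerivAt f f' t) (z : E) : CurveDerivAt (fun s => f s • z) (f' • z) t := by
  refine ((hasDerivAt_iff_tendsto_slope_zero.1 hf).smul_const z).congr fun h => ?_
  simp only [smul_assoc, sub_smul]

theorem IsSmoothCurve.continuous {c : ℝ → E} (hc : IsSmoothCurve c) : Continuous c := by
  obtain ⟨D, rfl, -, hD⟩ := hc
  exact hD 0

theorem IsSmoothCurve.isOpen_preimage {c : ℝ → E} (hc : IsSmoothCurve c) {U : Set E}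
    (hU : IsOpen[cInfTopology E] U) : IsOpen (c ⁻¹' U) :=
  isOpen_coinduced.1 (isOpen_iSup_iff.1 hU ⟨c, hc⟩)

theorem cInfTopology_le : cInfTopology E ≤ ‹TopologicalSpace E› :=
  iSup_le fun c => continuous_iff_coinduced_le.1 c.2.continuous

variable [ContinuousAdd E] [ContinuousSMul ℝ E]

theorem CurveDerivAt.continuousAt {c : ℝ → E} {v : E} {t : ℝ} (h : CurveDerivAt c v t) :
    ContinuousAt c t := by
  have hlin : Tendsto (fun s : ℝ => c t + s • (s⁻¹ • (c (t + s) - c t))) (𝓝[≠] 0)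
      (𝓝 (c t + (0 : ℝ) • v)) :=
    tendsto_const_nhds.add ((tendsto_id.mono_left nhdsWithin_le_nhds).smul h)
  rw [zero_smul, add_zero] at hlin
  have hshift : ContinuousAt (fun s => c (t + s)) 0 := by
    rw [← continuousWithinAt_compl_self, ContinuousWithinAt, add_zero]
    refine hlin.congr' (eventually_nhdsWithin_of_forall fun s (hs : s ≠ 0) => ?_)
    simp [smul_smul, hs]
  simpa [Function.comp_def] using
    hshift.comp_of_eq (continuous_sub_right t).continuousAt (sub_self t)

theorem isSmoothCurve_of_curveDerivAt {D : ℕ → ℝ → E}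
    (hD : ∀ n t, CurveDerivAt (D n) (D (n + 1) t) t) : IsSmoothCurve (D 0) :=
  ⟨D, rfl, hD, fun n => continuous_iff_continuousAt.2 fun t => (hD n t).continuousAt⟩

theorem IsSmoothCurve.const_add {c : ℝ → E} (hc : IsSmoothCurve c) (x : E) :
    IsSmoothCurve (fun t => x + c t) := by
  obtain ⟨D, rfl, hD, -⟩ := hc
  refine isSmoothCurve_of_curveDerivAt (D := Function.update D 0 fun t => x + D 0 t) ?_
  rintro (_ | n) t
  · simpa using (hD 0 t).const_add x
  · simpa using hD (n + 1) t

end SmoothCurves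

theorem support_iteratedDeriv_subset_tsupport {𝕜 F : Type*} [NontriviallyNormedField 𝕜]
    [NormedAddCommGroup F] [NormedSpace 𝕜 F] (f : 𝕜 → F) (k : ℕ) :
    Function.support (iteratedDeriv k f) ⊆ tsupport f := by
  induction k with
  | zero => simpa using subset_tsupport f
  | succ k ih =>
    rw [iteratedDeriv_succ]
    exact support_deriv_subset.trans (closure_minimal ih (isClosed_tsupport f))

section DyadicBumps

noncomputable def quarterBump : ContDiffBump (0 : ℝ) := ⟨1 / 8, 1 / 4, by norm_num, by norm_num⟩

/-- The `k`-th derivative of `t ↦ quarterBump (2 ^ n * t - 1)`, a bump function equal to `1` at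
`2⁻ⁿ` and supported in `[3/4 · 2⁻ⁿ, 5/4 · 2⁻ⁿ]`. -/
noncomputable def dyadicBump (n k : ℕ) (t : ℝ) : ℝ :=
  2 ^ (n * k) * iteratedDeriv k quarterBump (2 ^ n * t - 1)

theorem hasDerivAt_dyadicBump (n k : ℕ) (t : ℝ) :
    HasDerivAt (dyadicBump n k) (dyadicBump n (k + 1) t) t := by
  have hψ : HasDerivAt (iteratedDeriv k quarterBump)
      (iteratedDeriv (k + 1) quarterBump (2 ^ n * t - 1)) (2 ^ n * t - 1) := by
    rw [iteratedDeriv_succ]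
    exact ((quarterBump.contDiff (n := ⊤)).differentiable_iteratedDeriv k
      (by exact_mod_cast WithTop.coe_lt_top _) _).hasDerivAt
  have hin : HasDerivAt (fun s : ℝ => 2 ^ n * s - 1) (2 ^ n) t := by
    simpa using ((hasDerivAt_id t).const_mul ((2 : ℝ) ^ n)).sub_const 1
  refine ((hψ.comp t hin).const_mul ((2 : ℝ) ^ (n * k))).congr_deriv ?_
  rw [dyadicBump]
  ring

theorem dyadicBump_zero_inv_two_pow (n : ℕ) : dyadicBump n 0 (2 ^ n)⁻¹ = 1 := by
  have h : (2 : ℝ) ^ n * (2 ^ n)⁻¹ - 1 = 0 := by simp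
  rw [dyadicBump, iteratedDeriv_zero, h, mul_zero, pow_zero, one_mul]
  exact quarterBump.one_of_mem_closedBall (Metric.mem_closedBall_self (by norm_num [quarterBump]))

theorem abs_dyadicBump_le (k : ℕ) : ∃ C, ∀ n t, |dyadicBump n k t| ≤ C * 2 ^ (n * k) := by
  obtain ⟨C, hC⟩ := ((quarterBump.contDiff (n := ⊤)).continuous_iteratedDeriv k
    (by exact_mod_cast le_top)).bounded_above_of_compact_support
    (quarterBump.hasCompactSupport.mono' (support_iteratedDeriv_subset_tsupport _ k))
  refine ⟨C, fun n t => ?_⟩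
  rw [dyadicBump, abs_mul, abs_of_pos (by positivity), mul_comm]
  exact mul_le_mul_of_nonneg_right (hC _) (by positivity)

theorem mem_Icc_of_dyadicBump_ne_zero {n k : ℕ} {t : ℝ} (h : dyadicBump n k t ≠ 0) :
    2 ^ n * t ∈ Icc (3 / 4 : ℝ) (5 / 4) := by
  have hsupp : 2 ^ n * t - 1 ∈ tsupport quarterBump :=
    support_iteratedDeriv_subset_tsupport _ k (right_ne_zero_of_mul h)
  rw [quarterBump.tsupport_eq, Metric.mem_closedBall, Real.dist_eq, sub_zero, abs_le] at hsupp
  simp only [quarterBump] at hsupp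
  constructor <;> linarith [hsupp.1, hsupp.2]

theorem pos_of_dyadicBump_ne_zero {n k : ℕ} {t : ℝ} (h : dyadicBump n k t ≠ 0) : 0 < t :=
  pos_of_mul_pos_right (a := (2 : ℝ) ^ n) (by linarith [(mem_Icc_of_dyadicBump_ne_zero h).1])
    (by positivity)

theorem dyadicBump_of_nonpos (n k : ℕ) {t : ℝ} (ht : t ≤ 0) : dyadicBump n k t = 0 := by
  by_contra h
  exact (pos_of_dyadicBump_ne_zero h).not_ge ht

-- For `m > n` the window `[3/4, 5/4] · 2⁻ᵐ` ends at most at `5/6` of where the `n`-th one starts.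
theorem le_of_dyadicBump_ne_zero {m n j k : ℕ} {s s' : ℝ} (hs : dyadicBump m j s ≠ 0)
    (hs' : dyadicBump n k s' ≠ 0) (hss' : 5 * s' < 6 * s) : m ≤ n := by
  have hm := (mem_Icc_of_dyadicBump_ne_zero hs).2
  have hn := (mem_Icc_of_dyadicBump_ne_zero hs').1
  have hpos := pos_of_dyadicBump_ne_zero hs
  by_contra! hnm
  have h2 : 2 * 2 ^ n ≤ (2 : ℝ) ^ m := by
    rw [← pow_succ']
    exact pow_le_pow_right₀ one_le_two hnm
  nlinarith [mul_le_mul_of_nonneg_right h2 hpos.le,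
    mul_lt_mul_of_pos_left hss' (by positivity : (0 : ℝ) < 2 ^ n)]

theorem eq_of_dyadicBump_ne_zero {m n j k : ℕ} {s : ℝ} (hm : dyadicBump m j s ≠ 0)
    (hn : dyadicBump n k s ≠ 0) : m = n := by
  have hs := pos_of_dyadicBump_ne_zero hm
  exact le_antisymm (le_of_dyadicBump_ne_zero hm hn (by linarith))
    (le_of_dyadicBump_ne_zero hn hm (by linarith))

theorem exists_eventually_dyadicBump_eq_zero {t : ℝ} (ht : t ≠ 0) :
    ∃ n, ∀ᶠ s in 𝓝 t, ∀ m ≠ n, ∀ k, dyadicBump m k s = 0 := by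
  rcases ht.lt_or_gt with ht | ht
  · exact ⟨0, (gt_mem_nhds ht).mono fun s hs m _ k => dyadicBump_of_nonpos m k hs.le⟩
  have hV : Ioo (11 / 12 * t) (12 / 11 * t) ∈ 𝓝 t := Ioo_mem_nhds (by linarith) (by linarith)
  by_cases hex : ∃ n, ∃ s₀ ∈ Ioo (11 / 12 * t) (12 / 11 * t), ∃ j, dyadicBump n j s₀ ≠ 0
  · obtain ⟨n, s₀, hs₀, j, hn⟩ := hex
    refine ⟨n, mem_of_superset hV fun s hs m hmn k => ?_⟩
    by_contra hm
    exact hmn (le_antisymm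
      (le_of_dyadicBump_ne_zero hm hn (by linarith [hs.1, hs₀.2]))
      (le_of_dyadicBump_ne_zero hn hm (by linarith [hs.2, hs₀.1])))
  · push Not at hex
    exact ⟨0, mem_of_superset hV fun s hs m _ k => hex m s hs k⟩

end DyadicBumps

section DyadicCurve

variable {E : Type*} [AddCommGroup E] [Module ℝ E]

/-- The `k`-th derivative of the curve `∑ₙ dyadicBump n 0 t • z n`; at most one summand is
nonzero at each `t`. -/
noncomputable def dyadicCurve (z : ℕ → E) (k : ℕ) (t : ℝ) : E :=
  ∑ᶠ n, dyadicBump n k t • z n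

theorem dyadicCurve_eq_smul {z : ℕ → E} {n k : ℕ} {t : ℝ} (h : ∀ m ≠ n, dyadicBump m k t = 0) :
    dyadicCurve z k t = dyadicBump n k t • z n :=
  finsum_eq_single _ n fun m hm => by rw [h m hm, zero_smul]

theorem dyadicCurve_zero (z : ℕ → E) (k : ℕ) : dyadicCurve z k 0 = 0 :=
  finsum_eq_zero_of_forall_eq_zero fun n => by rw [dyadicBump_of_nonpos n k le_rfl, zero_smul]

theorem dyadicCurve_zero_inv_two_pow (z : ℕ → E) (n : ℕ) : dyadicCurve z 0 (2 ^ n)⁻¹ = z n := by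
  have hn : dyadicBump n 0 (2 ^ n)⁻¹ ≠ 0 := by rw [dyadicBump_zero_inv_two_pow]; exact one_ne_zero
  rw [dyadicCurve_eq_smul fun m hm => ?_, dyadicBump_zero_inv_two_pow, one_smul]
  by_contra h
  exact hm (eq_of_dyadicBump_ne_zero h hn)

variable [TopologicalSpace E]

def DecaysSuperexponentially (z : ℕ → E) : Prop :=
  ∀ k : ℕ, Tendsto (fun n => (2 : ℝ) ^ (n * k) • z n) atTop (𝓝 0)

variable [ContinuousSMul ℝ E]

theorem curveDerivAt_dyadicCurve_of_ne_zero (z : ℕ → E) (k : ℕ) {t : ℝ} (ht : t ≠ 0) :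
    CurveDerivAt (dyadicCurve z k) (dyadicCurve z (k + 1) t) t := by
  obtain ⟨n, hn⟩ := exists_eventually_dyadicBump_eq_zero ht
  have hloc : ∀ j, dyadicCurve z j =ᶠ[𝓝 t] fun s => dyadicBump n j s • z n := fun j =>
    hn.mono fun s hs => dyadicCurve_eq_smul fun m hm => hs m hm j
  rw [(hloc (k + 1)).eq_of_nhds]
  exact ((hasDerivAt_dyadicBump n k t).curveDerivAt_smul_const (z n)).congr_of_eventuallyEq
    (hloc k)

theorem DecaysSuperexponentially.exists_forall_smul_mem {z : ℕ → E}
    (hz : DecaysSuperexponentially z) {W : Set E} (hW : W ∈ 𝓝 0) (hWb : Balanced ℝ W)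
    (k : ℕ) (C : ℝ) : ∃ M, ∀ n ≥ M, ∀ a : ℝ, |a| ≤ C * 2 ^ (n * k) → a • z n ∈ W := by
  have hC : Tendsto (fun n => (C * 2 ^ (n * k)) • z n) atTop (𝓝 0) := by
    simpa [smul_smul] using (hz k).const_smul C
  obtain ⟨M, hM⟩ := eventually_atTop.1 (hC.eventually hW)
  exact ⟨M, fun n hn a ha => hWb.smul_mem_mono (hM n hn) (ha.trans (le_abs_self _))⟩

theorem tendsto_inv_smul_dyadicCurve {z : ℕ → E} (hz : DecaysSuperexponentially z) (k : ℕ) :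
    Tendsto (fun h : ℝ => h⁻¹ • dyadicCurve z k h) (𝓝[≠] 0) (𝓝 0) := by
  obtain ⟨C, hC⟩ := abs_dyadicBump_le k
  rw [(nhds_basis_balanced ℝ E).tendsto_right_iff]
  rintro W ⟨hW, hWb⟩
  obtain ⟨M, hM⟩ := hz.exists_forall_smul_mem hW hWb (k + 1) (2 * C)
  have hsmall : ∀ᶠ h : ℝ in 𝓝 0, 2 ^ M * h < 3 / 4 :=
    (by simpa using (continuous_const_mul ((2 : ℝ) ^ M)).tendsto 0 :
      Tendsto (fun h : ℝ => 2 ^ M * h) (𝓝 0) (𝓝 0)).eventually_lt_const (by norm_num)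
  filter_upwards [nhdsWithin_le_nhds hsmall] with h hh
  by_cases hex : ∃ n, dyadicBump n k h ≠ 0
  · obtain ⟨n, hn⟩ := hex
    have hpos := pos_of_dyadicBump_ne_zero hn
    have hwindow := (mem_Icc_of_dyadicBump_ne_zero hn).1
    have hMn : M ≤ n :=
      ((pow_lt_pow_iff_right₀ one_lt_two).1 (lt_of_mul_lt_mul_right (by linarith) hpos.le)).le
    rw [dyadicCurve_eq_smul fun m hm => by_contra fun h' => hm (eq_of_dyadicBump_ne_zero h' hn),
      smul_smul]
    refine hM n hMn _ ?_
    -- `h⁻¹ ≤ 4/3 · 2ⁿ` on the support of `dyadicBump n k`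
    have hb := hC n h
    rw [abs_mul, abs_inv, abs_of_pos hpos, inv_mul_le_iff₀ hpos, mul_add, mul_one, pow_add]
    have hP : 0 ≤ C * 2 ^ (n * k) := (abs_nonneg _).trans hb
    nlinarith [mul_le_mul_of_nonneg_left hwindow hP]
  · push Not at hex
    rw [dyadicCurve_eq_smul (n := 0) fun m _ => hex m, hex 0, zero_smul, smul_zero]
    exact mem_of_mem_nhds hW

theorem curveDerivAt_dyadicCurve {z : ℕ → E} (hz : DecaysSuperexponentially z) (k : ℕ) (t : ℝ) :
    CurveDerivAt (dyadicCurve z k) (dyadicCurve z (k + 1) t) t := by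
  rcases eq_or_ne t 0 with rfl | ht
  · simpa [CurveDerivAt, dyadicCurve_zero] using tendsto_inv_smul_dyadicCurve hz k
  · exact curveDerivAt_dyadicCurve_of_ne_zero z k ht

theorem isSmoothCurve_dyadicCurve [ContinuousAdd E] {z : ℕ → E}
    (hz : DecaysSuperexponentially z) : IsSmoothCurve (dyadicCurve z 0) :=
  isSmoothCurve_of_curveDerivAt (curveDerivAt_dyadicCurve hz)

theorem exists_strictMono_decaysSuperexponentially [FirstCountableTopology E] {w : ℕ → E}
    (hw : Tendsto w atTop (𝓝 0)) :
    ∃ φ : ℕ → ℕ, StrictMono φ ∧ DecaysSuperexponentially (w ∘ φ) := by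
  obtain ⟨B, hB⟩ := (𝓝 (0 : E)).exists_antitone_basis
  have hsel : ∀ j, ∀ᶠ N in atTop, ∀ k ∈ Iic j, (2 : ℝ) ^ (j * k) • w N ∈ B j := fun j =>
    (eventually_all_finite (finite_Iic j)).2 fun k _ =>
      (by simpa using hw.const_smul ((2 : ℝ) ^ (j * k)) :
        Tendsto (fun N => (2 : ℝ) ^ (j * k) • w N) atTop (𝓝 0)).eventually (hB.mem j)
  obtain ⟨φ, hφ, hφB⟩ := extraction_forall_of_eventually hsel
  refine ⟨φ, hφ, fun k => hB.toHasBasis.tendsto_right_iff.2 fun i _ => ?_⟩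
  filter_upwards [eventually_ge_atTop (max i k)] with j hj
  exact hB.antitone (le_of_max_le_left hj) (hφB j k (le_of_max_le_right hj))

end DyadicCurve

theorem le_cInfTopology {E : Type*} [AddCommGroup E] [Module ℝ E] [TopologicalSpace E]
    [IsTopologicalAddGroup E] [ContinuousSMul ℝ E] [FirstCountableTopology E] :
    ‹TopologicalSpace E› ≤ cInfTopology E := by
  refine TopologicalSpace.le_def.2 fun U hU => isOpen_iff_mem_nhds.2 fun x hx => ?_
  by_contra hUx
  obtain ⟨y, hyU, hyx⟩ := mem_closure_iff_seq_limit.1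
    (by rwa [closure_compl, mem_compl_iff, mem_interior_iff_mem_nhds] : x ∈ closure Uᶜ)
  obtain ⟨φ, -, hφ⟩ := exists_strictMono_decaysSuperexponentially (w := fun n => y n - x)
    (by simpa using hyx.sub_const x)
  set c : ℝ → E := fun t => x + dyadicCurve (fun n => y (φ n) - x) 0 t
  have hopen : IsOpen (c ⁻¹' U) :=
    ((isSmoothCurve_dyadicCurve hφ).const_add x).isOpen_preimage hU
  have h0 : (0 : ℝ) ∈ c ⁻¹' U := by simpa [c, dyadicCurve_zero] using hx
  have hdyadic : Tendsto (fun n : ℕ => ((2 : ℝ) ^ n)⁻¹) atTop (𝓝 0) :=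
    tendsto_inv_atTop_zero.comp (tendsto_pow_atTop_atTop_of_one_lt one_lt_two)
  obtain ⟨n, hn⟩ := (hdyadic.eventually (hopen.mem_nhds h0)).exists
  exact hyU (φ n) (by simpa [c, dyadicCurve_zero_inv_two_pow] using hn)

theorem frechet_cInf_eq_given_general {E : Type*} [AddCommGroup E] [Module ℝ E]
    [UniformSpace E] [IsUniformAddGroup E] [ContinuousSMul ℝ E]
    [TopologicalSpace.MetrizableSpace E] :
    cInfTopology E = (inferInstance : TopologicalSpace E) :=
  le_antisymm cInfTopology_le le_cInfTopology

theorem frechet_cInf_eq_given {E : Type*} [AddCommGroup E] [Module ℝ E]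
    [UniformSpace E] [IsUniformAddGroup E] [ContinuousSMul ℝ E] [LocallyConvexSpace ℝ E]
    [TopologicalSpace.MetrizableSpace E] [CompleteSpace E] :
    cInfTopology E = (inferInstance : TopologicalSpace E) :=
  frechet_cInf_eq_given_general
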